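/- arXiv:1502.03300 — 6 statements merged into one kernel-verified Lean document; each statement's English description precedes it below -/
import Mathlib

section
/- Let p^(1),...,p^(B) be random variables in [0,1] and m^(1),...,m^(B) ≥ 1 constants, with indicator values I^(b) ∈ {0,1} such that p^(b) = 1 whenever I^(b) = 0, and assume P[p^(b) ≤ u] ≤ u/m^(b) for all u ∈ [0,1] when I^(b) = 1. Define π(u) = (1/B) Σ_b 1{p^(b) m^(b) ≤ u}. Then for fixed γ ∈ (0,1) and α ∈ (0,1), P[π(αγ) ≥ γ] ≤ (α/B) Σ_b I^(b)/m^(b). -/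
open MeasureTheory Finset ENNReal

/-- Markov-type bound behind the quantile aggregation rule. -/
theorem stmt0 {Ω : Type*} [MeasurableSpace Ω] (μ : Measure Ω) [IsProbabilityMeasure μ]
    (B : ℕ) (hB : 0 < B) (p : Fin B → Ω → ℝ) (m : Fin B → ℝ) (I : Fin B → ℝ)
    (hmeas : ∀ b, Measurable (p b))
    (hp01 : ∀ b ω, p b ω ∈ Set.Icc (0:ℝ) 1)
    (hm : ∀ b, 1 ≤ m b)
    (hI : ∀ b, I b = 0 ∨ I b = 1)
    (hp1 : ∀ b, I b = 0 → ∀ ω, p b ω = 1)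
    (hsuper : ∀ b, I b = 1 → ∀ u ∈ Set.Icc (0:ℝ) 1,
      μ {ω | p b ω ≤ u} ≤ ENNReal.ofReal (u / m b))
    (γ α : ℝ) (hγ : γ ∈ Set.Ioo (0:ℝ) 1) (hα : α ∈ Set.Ioo (0:ℝ) 1) :
    μ {ω | γ ≤ (1 / (B:ℝ)) * ∑ b, (if p b ω * m b ≤ α * γ then (1:ℝ) else 0)}
      ≤ ENNReal.ofReal ((α / B) * ∑ b, I b / m b) := by
  obtain ⟨hγ0, hγ1⟩ := hγ
  obtain ⟨hα0, hα1⟩ := hα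
  have hB' : (0:ℝ) < B := Nat.cast_pos.mpr hB
  set c : ℝ := α * γ with hc
  have hc0 : 0 < c := mul_pos hα0 hγ0
  have hc1 : c < 1 := by nlinarith
  have hmset : ∀ b, MeasurableSet {ω | p b ω * m b ≤ c} := fun b =>
    measurableSet_le ((hmeas b).mul_const _) measurable_const
  have hInn : ∀ b, 0 ≤ I b := by
    intro b; rcases hI b with h | h <;> rw [h] <;> norm_num
  -- per-b bound
  have key : ∀ b, μ {ω | p b ω * m b ≤ c} ≤ ENNReal.ofReal (c * (I b / m b)) := by
    intro b
    have hmb : 0 < m b := lt_of_lt_of_le one_pos (hm b)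
    rcases hI b with h0 | h1
    · have hempty : {ω | p b ω * m b ≤ c} = ∅ := by
        ext ω
        simp only [Set.mem_setOf_eq, Set.mem_empty_iff_false, iff_false, not_le]
        rw [hp1 b h0 ω, one_mul]
        exact lt_of_lt_of_le hc1 (hm b)
      rw [hempty]
      simp
    · have hset : {ω | p b ω * m b ≤ c} = {ω | p b ω ≤ c / m b} := by
        ext ω; simp [le_div_iff₀ hmb]
      have hu : c / m b ∈ Set.Icc (0:ℝ) 1 := by
        constructor
        · positivity
        · rw [div_le_one hmb]; exact le_trans hc1.le (hm b)
      rw [hset]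
      refine le_trans (hsuper b h1 (c / m b) hu) (ENNReal.ofReal_le_ofReal ?_)
      rw [h1, div_div, mul_one_div]
      have hmm : m b ≤ m b * m b := le_mul_of_one_le_left hmb.le (hm b)
      exact div_le_div_of_nonneg_left hc0.le hmb hmm
  -- the empirical fraction
  set S : Ω → ℝ := fun ω => (1 / (B:ℝ)) * ∑ b, (if p b ω * m b ≤ c then (1:ℝ) else 0)
    with hS
  have hSnn : ∀ ω, 0 ≤ S ω := by
    intro ω
    exact mul_nonneg (by positivity)
      (Finset.sum_nonneg fun b _ => by split <;> norm_num)
  have hSmeas : Measurable S := by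
    exact measurable_const.mul
      (Finset.measurable_sum _ fun b _ => Measurable.ite (hmset b) measurable_const
        measurable_const)
  set T : ℝ := (α / B) * ∑ b, I b / m b with hT
  have hTnn : 0 ≤ T := by
    refine mul_nonneg (by positivity) (Finset.sum_nonneg fun b _ => ?_)
    have hmb : 0 < m b := lt_of_lt_of_le one_pos (hm b)
    exact div_nonneg (hInn b) hmb.le
  -- lintegral computation
  have hind : ∀ b : Fin B, (fun ω => ENNReal.ofReal (if p b ω * m b ≤ c then (1:ℝ) else 0))
      = Set.indicator {ω | p b ω * m b ≤ c} (fun _ => (1:ℝ≥0∞)) := by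
    intro b; ext ω
    by_cases h : p b ω * m b ≤ c <;> simp [Set.indicator_apply, h]
  have hindmeas : ∀ b : Fin B,
      Measurable (fun ω => ENNReal.ofReal (if p b ω * m b ≤ c then (1:ℝ) else 0)) := by
    intro b; rw [hind b]
    exact Measurable.indicator measurable_const (hmset b)
  have hlint : ∫⁻ ω, ENNReal.ofReal (S ω) ∂μ ≤ ENNReal.ofReal (γ * T) := by
    have hrw : ∀ ω, ENNReal.ofReal (S ω)
        = ENNReal.ofReal (1 / (B:ℝ)) *
          ∑ b, ENNReal.ofReal (if p b ω * m b ≤ c then (1:ℝ) else 0) := by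
      intro ω
      rw [hS]
      rw [ENNReal.ofReal_mul (by positivity)]
      congr 1
      exact ENNReal.ofReal_sum_of_nonneg (fun b _ => by split <;> norm_num)
    calc ∫⁻ ω, ENNReal.ofReal (S ω) ∂μ
        = ENNReal.ofReal (1 / (B:ℝ)) * ∑ b, μ {ω | p b ω * m b ≤ c} := by
          simp_rw [hrw]
          rw [lintegral_const_mul _ (Finset.measurable_sum _ fun b _ => hindmeas b)]
          congr 1
          rw [lintegral_finset_sum _ (fun b _ => hindmeas b)]
          refine Finset.sum_congr rfl fun b _ => ?_
          rw [hind b]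
          exact lintegral_indicator_one (hmset b)
      _ ≤ ENNReal.ofReal (1 / (B:ℝ)) * ∑ b, ENNReal.ofReal (c * (I b / m b)) := by
          gcongr with b
          exact key b
      _ = ENNReal.ofReal (γ * T) := by
          rw [← ENNReal.ofReal_sum_of_nonneg (fun b _ => by
            have hmb : 0 < m b := lt_of_lt_of_le one_pos (hm b)
            exact mul_nonneg hc0.le (div_nonneg (hInn b) hmb.le))]
          rw [← ENNReal.ofReal_mul (by positivity)]
          congr 1
          rw [hT, ← Finset.mul_sum]
          field_simp
          ring
  -- Markov
  have hfm : Measurable fun ω => ENNReal.ofReal (S ω) :=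
    ENNReal.measurable_ofReal.comp hSmeas
  have markov := mul_meas_ge_le_lintegral₀ (μ := μ) hfm.aemeasurable (ENNReal.ofReal γ)
  have hEeq : {ω | γ ≤ S ω} = {ω | ENNReal.ofReal γ ≤ ENNReal.ofReal (S ω)} := by
    ext ω
    simp [ENNReal.ofReal_le_ofReal_iff (hSnn ω)]
  have hfinal : ENNReal.ofReal γ * μ {ω | γ ≤ S ω} ≤ ENNReal.ofReal γ * ENNReal.ofReal T := by
    rw [hEeq, ← ENNReal.ofReal_mul hγ0.le]
    exact le_trans markov hlint
  have hγne : ENNReal.ofReal γ ≠ 0 := by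
    simp [ENNReal.ofReal_eq_zero, not_le, hγ0]
  have := (ENNReal.mul_le_mul_iff_right hγne ENNReal.ofReal_ne_top).mp hfinal
  exact this
end

section
/- Let U be a random variable in [0,1] with P[U ≤ u] ≤ u for all u ∈ [0,1] (superuniform). Then for α ∈ (0,1) and γ_min ∈ (0,1), E[sup_{γ ∈ (γ_min,1)} 1{U ≤ αγ}/γ] ≤ α(1 − log γ_min). -/
/-! The supremum is `g (U)` for an explicit antitone `g`: `0` on `[α, 1]`, `α / u` on
`(α γmin, α)` and `1 / γmin` below. A superuniform `U` charges every lower set of `[0, 1]` at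
most as much as Lebesgue measure does, so the layer-cake formula gives `E[g(U)] ≤ ∫₀¹ g`, and
`∫₀¹ g = α + α log (1 / γmin)`. -/

open MeasureTheory Set

noncomputable def supIndicatorDiv (α γmin u : ℝ) : ℝ :=
  if α ≤ u then 0 else if u ≤ α * γmin then γmin⁻¹ else α / u

theorem sSup_image_indicator_div {α γmin : ℝ} (hα : 0 < α) (hγ0 : 0 < γmin) (hγ1 : γmin < 1)
    (u : ℝ) :
    sSup ((fun γ => (if u ≤ α * γ then (1:ℝ) else 0) / γ) '' Ioo γmin 1)
      = supIndicatorDiv α γmin u := by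
  have hne : (Ioo γmin 1).Nonempty := nonempty_Ioo.2 hγ1
  unfold supIndicatorDiv
  split_ifs with hαu hu
  · have hzero : EqOn (fun γ => (if u ≤ α * γ then (1:ℝ) else 0) / γ) (fun _ => 0) (Ioo γmin 1) :=
      fun γ hγ => by simp only [if_neg (by nlinarith [hγ.2] : ¬u ≤ α * γ), zero_div]
    rw [image_congr hzero, hne.image_const, csSup_singleton]
  · have hinv : EqOn (fun γ => (if u ≤ α * γ then (1:ℝ) else 0) / γ) (·⁻¹) (Ioo γmin 1) :=
      fun γ hγ => by simp only [if_pos (by nlinarith [hγ.1] : u ≤ α * γ), one_div]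
    rw [image_congr hinv]
    refine (isLUB_of_mem_closure ?_ ?_).csSup_eq (hne.image _)
    · rintro _ ⟨γ, hγ, rfl⟩
      exact inv_anti₀ hγ0 hγ.1.le
    · exact (continuousAt_inv₀ hγ0.ne').continuousWithinAt.mem_closure_image
        (by rw [closure_Ioo hγ1.ne]; exact left_mem_Icc.2 hγ1.le)
  · push Not at hαu hu
    have hu0 : 0 < u := (mul_pos hα hγ0).trans hu
    refine IsGreatest.csSup_eq ⟨⟨u / α, ⟨?_, ?_⟩, ?_⟩, ?_⟩
    · rwa [lt_div_iff₀ hα, mul_comm]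
    · rwa [div_lt_one hα]
    · simp only [mul_div_cancel₀ u hα.ne', le_refl, if_true, one_div_div]
    · rintro _ ⟨γ, hγ, rfl⟩
      have hγpos : 0 < γ := hγ0.trans hγ.1
      dsimp only
      split_ifs with h
      · rw [div_le_div_iff₀ hγpos hu0]; linarith
      · rw [zero_div]; positivity

theorem antitone_supIndicatorDiv {α γmin : ℝ} (hα : 0 < α) (hγ0 : 0 < γmin) :
    Antitone (supIndicatorDiv α γmin) := by
  intro u v huv
  have hαγ : 0 < α * γmin := mul_pos hα hγ0
  unfold supIndicatorDiv
  split_ifs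
  all_goals first
    | positivity
    | exact le_rfl
    | (exfalso; linarith)
    | exact div_nonneg hα.le (by linarith)
    | exact div_le_div_of_nonneg_left hα.le (by linarith) huv
    | exact (div_le_div_of_nonneg_left hα.le hαγ (by linarith)).trans_eq (by field_simp)

theorem supIndicatorDiv_nonneg {α γmin : ℝ} (hα : 0 < α) (hγ0 : 0 < γmin) :
    0 ≤ supIndicatorDiv α γmin := fun u => by
  unfold supIndicatorDiv
  split_ifs
  · exact le_rfl
  · positivity
  · exact div_nonneg hα.le (by nlinarith)

theorem integral_supIndicatorDiv {α γmin : ℝ} (hα0 : 0 < α) (hα1 : α ≤ 1) (hγ0 : 0 < γmin)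
    (hγ1 : γmin < 1) :
    ∫ u in (0:ℝ)..1, supIndicatorDiv α γmin u = α * (1 - Real.log γmin) := by
  have hαγ0 : 0 < α * γmin := mul_pos hα0 hγ0
  have hαγ1 : α * γmin < α := mul_lt_of_lt_one_right hα0 hγ1
  have hint (a b : ℝ) : IntervalIntegrable (supIndicatorDiv α γmin) volume a b :=
    (antitone_supIndicatorDiv hα0 hγ0).intervalIntegrable
  have hlow : ∫ u in (0:ℝ)..α * γmin, supIndicatorDiv α γmin u = α := by
    rw [intervalIntegral.integral_congr (g := fun _ => γmin⁻¹) fun u hu => ?_]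
    · simp [hγ0.ne']
    · rw [uIcc_of_le hαγ0.le] at hu
      simp [supIndicatorDiv, hu.2, (hu.2.trans_lt hαγ1).not_ge]
  have hmid : ∫ u in α * γmin..α, supIndicatorDiv α γmin u = -α * Real.log γmin := by
    rw [intervalIntegral.integral_congr_Ioo_of_le hαγ1.le (g := fun u => α * u⁻¹) fun u hu => ?_]
    · rw [intervalIntegral.integral_const_mul, integral_inv_of_pos hαγ0 hα0,
        div_mul_cancel_left₀ hα0.ne', Real.log_inv]
      ring
    · simp [supIndicatorDiv, hu.2.not_ge, hu.1.not_ge, div_eq_mul_inv]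
  have hhigh : ∫ u in α..1, supIndicatorDiv α γmin u = 0 := by
    rw [intervalIntegral.integral_congr (g := fun _ => 0) fun u hu => ?_]
    · simp
    · rw [uIcc_of_le hα1] at hu
      simp [supIndicatorDiv, hu.1]
  rw [← intervalIntegral.integral_add_adjacent_intervals (hint 0 (α * γmin)) (hint _ 1),
    ← intervalIntegral.integral_add_adjacent_intervals (hint (α * γmin) α) (hint α 1),
    hlow, hmid, hhigh]
  ring

section Superuniform

variable {Ω : Type*} [MeasurableSpace Ω] {μ : Measure Ω} {U : Ω → ℝ}

theorem measure_preimage_le_volume_of_isLowerSet (hU01 : ∀ ω, U ω ∈ Icc (0:ℝ) 1)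
    (hsuper : ∀ u ∈ Icc (0:ℝ) 1, μ {ω | U ω ≤ u} ≤ ENNReal.ofReal u)
    {S : Set ℝ} (hS : IsLowerSet S) :
    μ (U ⁻¹' S) ≤ volume (S ∩ Icc 0 1) := by
  rcases (S ∩ Icc 0 1).eq_empty_or_nonempty with hempty | hne
  · have : U ⁻¹' S = ∅ := eq_empty_of_forall_notMem fun ω hω =>
      hempty.subset ⟨hω, hU01 ω⟩
    simp [this]
  have hbdd : BddAbove (S ∩ Icc 0 1) := bddAbove_Icc.mono inter_subset_right
  -- `S ∩ [0, 1]` lies between `[0, c)` and `[0, c]`.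
  set c := sSup (S ∩ Icc 0 1)
  have hc : c ∈ Icc 0 1 :=
    ⟨hne.some_mem.2.1.trans (le_csSup hbdd hne.some_mem), csSup_le hne fun x hx => hx.2.2⟩
  calc μ (U ⁻¹' S) ≤ μ {ω | U ω ≤ c} := measure_mono fun ω hω => le_csSup hbdd ⟨hω, hU01 ω⟩
    _ ≤ ENNReal.ofReal c := hsuper c hc
    _ = volume (Ico 0 c) := by rw [Real.volume_Ico, sub_zero]
    _ ≤ volume (S ∩ Icc 0 1) := measure_mono fun u hu => by
        obtain ⟨s, hs, hus⟩ := exists_lt_of_lt_csSup hne hu.2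
        exact ⟨hS hus.le hs.1, hu.1, hus.le.trans hs.2.2⟩

theorem lintegral_comp_le_of_superuniform (hU : Measurable U) (hU01 : ∀ ω, U ω ∈ Icc (0:ℝ) 1)
    (hsuper : ∀ u ∈ Icc (0:ℝ) 1, μ {ω | U ω ≤ u} ≤ ENNReal.ofReal u)
    {g : ℝ → ℝ} (hg : Antitone g) (hg0 : 0 ≤ g) :
    ∫⁻ ω, ENNReal.ofReal (g (U ω)) ∂μ ≤ ∫⁻ u in Icc 0 1, ENNReal.ofReal (g u) := by
  rw [lintegral_eq_lintegral_meas_lt μ (ae_of_all _ fun ω => hg0 _)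
      (hg.measurable.comp hU).aemeasurable,
    lintegral_eq_lintegral_meas_lt _ (ae_of_all _ hg0) hg.measurable.aemeasurable]
  refine lintegral_mono fun t => ?_
  rw [Measure.restrict_apply' measurableSet_Icc]
  exact measure_preimage_le_volume_of_isLowerSet hU01 hsuper
    fun a b hba ha => ha.trans_le (hg hba)

theorem integral_comp_le_of_superuniform (hU : Measurable U) (hU01 : ∀ ω, U ω ∈ Icc (0:ℝ) 1)
    (hsuper : ∀ u ∈ Icc (0:ℝ) 1, μ {ω | U ω ≤ u} ≤ ENNReal.ofReal u)
    {g : ℝ → ℝ} (hg : Antitone g) (hg0 : 0 ≤ g) :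
    ∫ ω, g (U ω) ∂μ ≤ ∫ u in (0:ℝ)..1, g u := by
  have hint : IntegrableOn g (Icc 0 1) := (hg.antitoneOn _).integrableOn_isCompact isCompact_Icc
  rw [intervalIntegral.integral_of_le zero_le_one, ← integral_Icc_eq_integral_Ioc,
    integral_eq_lintegral_of_nonneg_ae (ae_of_all _ hg0) hg.measurable.aestronglyMeasurable,
    integral_eq_lintegral_of_nonneg_ae (f := fun ω => g (U ω)) (ae_of_all _ fun ω => hg0 _)
      (hg.measurable.comp hU).aestronglyMeasurable]
  exact ENNReal.toReal_mono hint.lintegral_lt_top.ne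
    (lintegral_comp_le_of_superuniform hU hU01 hsuper hg hg0)

end Superuniform

theorem stmt4_general {Ω : Type*} [MeasurableSpace Ω] (μ : Measure Ω)
    (U : Ω → ℝ) (hU : Measurable U)
    (hU01 : ∀ ω, U ω ∈ Set.Icc (0:ℝ) 1)
    (hsuper : ∀ u ∈ Set.Icc (0:ℝ) 1, μ {ω | U ω ≤ u} ≤ ENNReal.ofReal u)
    (α γmin : ℝ) (hα : α ∈ Set.Ioo (0:ℝ) 1) (hγ : γmin ∈ Set.Ioo (0:ℝ) 1) :
    ∫ ω, sSup ((fun γ => (if U ω ≤ α * γ then (1:ℝ) else 0) / γ) '' Set.Ioo γmin 1) ∂μ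
      ≤ α * (1 - Real.log γmin) := by
  obtain ⟨hα0, hα1⟩ := hα
  obtain ⟨hγ0, hγ1⟩ := hγ
  simp_rw [sSup_image_indicator_div hα0 hγ0 hγ1]
  calc ∫ ω, supIndicatorDiv α γmin (U ω) ∂μ ≤ ∫ u in (0:ℝ)..1, supIndicatorDiv α γmin u :=
        integral_comp_le_of_superuniform hU hU01 hsuper (antitone_supIndicatorDiv hα0 hγ0)
          (supIndicatorDiv_nonneg hα0 hγ0)
    _ = α * (1 - Real.log γmin) := integral_supIndicatorDiv hα0 hα1.le hγ0 hγ1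

/-- for a superuniform `U` with values in `[0,1]`,
`E[sup_{γ ∈ (γ_min,1)} 1{U ≤ αγ}/γ] ≤ α (1 − log γ_min)`. -/
theorem stmt4 {Ω : Type*} [MeasurableSpace Ω] (μ : Measure Ω) [IsProbabilityMeasure μ]
    (U : Ω → ℝ) (hU : Measurable U)
    (hU01 : ∀ ω, U ω ∈ Set.Icc (0:ℝ) 1)
    (hsuper : ∀ u ∈ Set.Icc (0:ℝ) 1, μ {ω | U ω ≤ u} ≤ ENNReal.ofReal u)
    (α γmin : ℝ) (hα : α ∈ Set.Ioo (0:ℝ) 1) (hγ : γmin ∈ Set.Ioo (0:ℝ) 1) :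
    ∫ ω, sSup ((fun γ => (if U ω ≤ α * γ then (1:ℝ) else 0) / γ) '' Set.Ioo γmin 1) ∂μ
      ≤ α * (1 - Real.log γmin) :=
  stmt4_general μ U hU hU01 hsuper α γmin hα hγ
end

section
/- Let p^(1),...,p^(B) be random variables in [0,1], m^(1),...,m^(B) ≥ 1 constants, and I^(b) ∈ {0,1} indicators with p^(b) = 1 when I^(b) = 0 and P[p^(b) ≤ u] ≤ u/m^(b) for all u ∈ [0,1] when I^(b) = 1. Define Q(γ) as the γ-quantile aggregation min{1, q_γ(p^(1)m^(1)/γ,...,p^(B)m^(B)/γ)}. Then P[inf_{γ ∈ (γ_min,1)} Q(γ) ≤ α] ≤ (1 − log γ_min)(α/B) Σ_b I^(b)/m^(b) for all α ∈ (0,1) and γ_min ∈ (0,1). -/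
/-!
If `Q(γ) < a` for some `γ ∈ (γmin, 1)`, then at least `γ B` of the numbers `p_b m_b / a` are `≤ γ`,
and each of them has `sup_{γ'} 1{p_b m_b / a ≤ γ'} / γ' ≥ 1 / γ`; hence `B` is at most the sum of
these suprema. Markov's inequality bounds the probability of this event by the average of their
expectations, and the layer-cake formula together with `P[p_b m_b / a ≤ t] ≤ a t / m_b` bounds each
expectation by `(1 - log γmin) a I_b / m_b`. Finally let `a ↓ α`.
-/

open MeasureTheory Finset

/-- The empirical `γ`-quantile of the components of a vector `u ∈ ℝ^B`. -/
noncomputable def empQuantile5 {B : ℕ} (γ : ℝ) (u : Fin B → ℝ) : ℝ :=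
  sInf {v : ℝ | ⌈γ * (B : ℝ)⌉₊ ≤ (univ.filter (fun b => u b ≤ v)).card}

open Real Set Filter

/-- `quantileWeight γmin x = sup_{γ ∈ (γmin, 1)} 1{x ≤ γ} / γ`. -/
noncomputable def quantileWeight (γmin x : ℝ) : ℝ :=
  if x < 1 then (max γmin x)⁻¹ else 0

/-- `adaptiveQuantile γmin (fun b => p b * m b) = inf_{γ ∈ (γmin, 1)} Q(γ)`. -/
noncomputable def adaptiveQuantile {B : ℕ} (γmin : ℝ) (q : Fin B → ℝ) : ℝ :=
  sInf ((fun γ => min 1 (empQuantile5 γ (fun b => q b / γ))) '' Ioo γmin 1)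

section quantileWeight

variable {γmin : ℝ}

lemma quantileWeight_nonneg (hγmin : 0 < γmin) (x : ℝ) : 0 ≤ quantileWeight γmin x := by
  unfold quantileWeight
  split_ifs
  · exact inv_nonneg.2 (hγmin.le.trans (le_max_left _ _))
  · exact le_rfl

lemma quantileWeight_le_inv (hγmin : 0 < γmin) (x : ℝ) : quantileWeight γmin x ≤ γmin⁻¹ := by
  unfold quantileWeight
  split_ifs
  · exact inv_anti₀ hγmin (le_max_left _ _)
  · positivity

lemma quantileWeight_of_one_le {x : ℝ} (hx : 1 ≤ x) : quantileWeight γmin x = 0 :=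
  if_neg hx.not_gt

lemma inv_le_quantileWeight (hγmin : 0 < γmin) {γ x : ℝ} (hγ : γ ∈ Ioo γmin 1) (hx : x ≤ γ) :
    γ⁻¹ ≤ quantileWeight γmin x := by
  rw [quantileWeight, if_pos (hx.trans_lt hγ.2)]
  exact inv_anti₀ (hγmin.trans_le (le_max_left _ _)) (max_le hγ.1.le hx)

lemma le_min_one_inv_of_lt_quantileWeight {t x : ℝ} (ht : 0 < t) (h : t < quantileWeight γmin x) :
    x ≤ min 1 t⁻¹ := by
  unfold quantileWeight at h
  split_ifs at h with hx
  · have hmax : 0 < max γmin x := inv_pos.1 (ht.trans h)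
    exact le_min hx.le ((le_max_right _ _).trans ((lt_inv_comm₀ ht hmax).1 h).le)
  · exact absurd h ht.le.not_gt

lemma measurable_quantileWeight : Measurable (quantileWeight γmin) :=
  Measurable.ite measurableSet_Iio (measurable_const.max measurable_id).inv measurable_const

end quantileWeight

lemma lintegral_Ioc_min_one_inv {γmin : ℝ} (hγ0 : 0 < γmin) (hγ1 : γmin < 1) :
    ∫⁻ t in Ioc 0 γmin⁻¹, ENNReal.ofReal (min 1 t⁻¹) = ENNReal.ofReal (1 - log γmin) := by
  have hone : (1 : ℝ) ≤ γmin⁻¹ := one_le_inv₀ hγ0 |>.2 hγ1.le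
  rw [← Ioc_union_Ioc_eq_Ioc zero_le_one hone,
    lintegral_union measurableSet_Ioc (Ioc_disjoint_Ioc_of_le le_rfl)]
  have h_head : ∫⁻ t in Ioc 0 1, ENNReal.ofReal (min 1 t⁻¹) = 1 := by
    rw [setLIntegral_congr_fun measurableSet_Ioc (g := fun _ => 1)
      fun t ht => by rw [min_eq_left (one_le_inv₀ ht.1 |>.2 ht.2), ENNReal.ofReal_one]]
    simp
  have h_tail : ∫⁻ t in Ioc 1 γmin⁻¹, ENNReal.ofReal (min 1 t⁻¹) = ENNReal.ofReal (-log γmin) := by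
    have hinv : ∀ t ∈ Ioc (1 : ℝ) γmin⁻¹, min 1 t⁻¹ = t⁻¹ := fun t ht =>
      min_eq_right (inv_le_one_of_one_le₀ ht.1.le)
    have hint : IntegrableOn (fun t : ℝ => t⁻¹) (Ioc 1 γmin⁻¹) :=
      (continuousOn_inv₀.mono fun t ht => (zero_lt_one.trans_le ht.1).ne').integrableOn_Icc
        |>.mono_set Ioc_subset_Icc_self
    rw [setLIntegral_congr_fun measurableSet_Ioc fun t ht => by rw [hinv t ht],
      ← ofReal_integral_eq_lintegral_ofReal hint
        ((ae_restrict_mem measurableSet_Ioc).mono fun t ht =>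
          inv_nonneg.2 (zero_le_one.trans ht.1.le)),
      ← intervalIntegral.integral_of_le hone, integral_inv_of_pos one_pos (by positivity), div_one,
      log_inv]
  rw [h_head, h_tail, ← ENNReal.ofReal_one,
    ← ENNReal.ofReal_add zero_le_one (neg_nonneg.2 (log_nonpos hγ0.le hγ1.le)), sub_eq_add_neg]

lemma lintegral_quantileWeight_le {Ω : Type*} [MeasurableSpace Ω] {μ : Measure Ω}
    {U : Ω → ℝ} (hU : Measurable U) {c γmin : ℝ} (hγ0 : 0 < γmin) (hγ1 : γmin < 1)
    (hcdf : ∀ t ∈ Ioc (0 : ℝ) 1, μ {ω | U ω ≤ t} ≤ ENNReal.ofReal (c * t)) :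
    ∫⁻ ω, ENNReal.ofReal (quantileWeight γmin (U ω)) ∂μ ≤ ENNReal.ofReal (c * (1 - log γmin)) := by
  -- Layer cake: the tail at level `t` is at most `c · min 1 t⁻¹`, and vanishes beyond `γmin⁻¹`.
  have h_tail : ∀ t ∈ Ioi (0 : ℝ), μ {ω | t < quantileWeight γmin (U ω)} ≤
      ENNReal.ofReal c * (Ioc 0 γmin⁻¹).indicator (fun t => ENNReal.ofReal (min 1 t⁻¹)) t := by
    intro t (ht : 0 < t)
    by_cases htγ : t ≤ γmin⁻¹
    · rw [indicator_of_mem (show t ∈ Set.Ioc 0 γmin⁻¹ from ⟨ht, htγ⟩),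
        ← ENNReal.ofReal_mul' (by positivity)]
      calc μ {ω | t < quantileWeight γmin (U ω)}
          ≤ μ {ω | U ω ≤ min 1 t⁻¹} :=
            measure_mono fun ω hω => le_min_one_inv_of_lt_quantileWeight ht hω
        _ ≤ _ := hcdf _ ⟨by positivity, min_le_left _ _⟩
    · have hempty : {ω | t < quantileWeight γmin (U ω)} = ∅ :=
        eq_empty_of_forall_notMem fun ω hω =>
          htγ (hω.trans_le (quantileWeight_le_inv hγ0 _)).le
      simp [hempty]
  calc ∫⁻ ω, ENNReal.ofReal (quantileWeight γmin (U ω)) ∂μ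
      = ∫⁻ t in Ioi 0, μ {ω | t < quantileWeight γmin (U ω)} :=
        lintegral_eq_lintegral_meas_lt μ (ae_of_all _ fun ω => quantileWeight_nonneg hγ0 _)
          (measurable_quantileWeight.comp hU).aemeasurable
    _ ≤ ∫⁻ t in Ioi 0,
          ENNReal.ofReal c * (Ioc 0 γmin⁻¹).indicator (fun t => ENNReal.ofReal (min 1 t⁻¹)) t :=
        setLIntegral_mono' measurableSet_Ioi h_tail
    _ = ENNReal.ofReal c * ∫⁻ t in Ioc 0 γmin⁻¹, ENNReal.ofReal (min 1 t⁻¹) := by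
        rw [lintegral_const_mul' _ _ ENNReal.ofReal_ne_top, lintegral_indicator measurableSet_Ioc,
          Measure.restrict_restrict measurableSet_Ioc, Set.inter_eq_left.2 Set.Ioc_subset_Ioi_self]
    _ = ENNReal.ofReal (c * (1 - log γmin)) := by
        rw [lintegral_Ioc_min_one_inv hγ0 hγ1,
          ← ENNReal.ofReal_mul' (sub_nonneg.2 (log_nonpos hγ0.le hγ1.le |>.trans zero_le_one))]

lemma le_card_of_empQuantile5_lt {B : ℕ} {γ a : ℝ} (hγ : γ ≤ 1) (u : Fin B → ℝ)
    (h : empQuantile5 γ u < a) : γ * B ≤ #{b | u b ≤ a} := by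
  obtain ⟨M, hM⟩ := Finite.bddAbove_range u
  have hne : {v : ℝ | ⌈γ * (B : ℝ)⌉₊ ≤ #{b | u b ≤ v}}.Nonempty := by
    refine ⟨M, ?_⟩
    rw [Set.mem_ofPred_eq, filter_true_of_mem fun b _ => hM (Set.mem_range_self b), card_univ,
      Fintype.card_fin, Nat.ceil_le]
    exact mul_le_of_le_one_left (Nat.cast_nonneg B) hγ
  obtain ⟨v, hv, hva⟩ := exists_lt_of_csInf_lt hne h
  calc γ * B ≤ ⌈γ * (B : ℝ)⌉₊ := Nat.le_ceil _
    _ ≤ #{b | u b ≤ v} := by exact_mod_cast hv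
    _ ≤ #{b | u b ≤ a} :=
        Nat.cast_le.2 (card_le_card (monotone_filter_right _ fun b _ hb => hb.trans hva.le))

lemma card_le_mul_sum_quantileWeight {B : ℕ} {γmin γ : ℝ} (hγmin : 0 < γmin)
    (hγ : γ ∈ Set.Ioo γmin 1) (x : Fin B → ℝ) : (#{b | x b ≤ γ} : ℝ) ≤ γ * ∑ b, quantileWeight γmin (x b) := by
  have hγ0 : 0 < γ := hγmin.trans hγ.1
  calc (#{b | x b ≤ γ} : ℝ) = ∑ b ∈ univ with x b ≤ γ, γ * γ⁻¹ := by
        simp [mul_inv_cancel₀ hγ0.ne']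
    _ ≤ ∑ b ∈ univ with x b ≤ γ, γ * quantileWeight γmin (x b) :=
        sum_le_sum fun b hb => mul_le_mul_of_nonneg_left
          (inv_le_quantileWeight hγmin hγ (mem_filter.1 hb).2) hγ0.le
    _ ≤ ∑ b, γ * quantileWeight γmin (x b) :=
        sum_le_sum_of_subset_of_nonneg (filter_subset _ _) fun b _ _ =>
          mul_nonneg hγ0.le (quantileWeight_nonneg hγmin _)
    _ = γ * ∑ b, quantileWeight γmin (x b) := (mul_sum _ _ _).symm

lemma natCast_le_sum_quantileWeight {B : ℕ} {γmin a : ℝ} (hγ0 : 0 < γmin) (hγ1 : γmin < 1)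
    (ha0 : 0 < a) (ha1 : a < 1) (q : Fin B → ℝ) (h : adaptiveQuantile γmin q < a) :
    (B : ℝ) ≤ ∑ b, quantileWeight γmin (q b / a) := by
  obtain ⟨_, ⟨γ, hγ, rfl⟩, hQ⟩ :=
    exists_lt_of_csInf_lt ((Set.nonempty_Ioo.2 hγ1).image _) h
  have hγpos : 0 < γ := hγ0.trans hγ.1
  have hcount : γ * B ≤ #{b | q b / a ≤ γ} := by
    have := le_card_of_empQuantile5_lt hγ.2.le _ ((min_lt_iff.1 hQ).resolve_left ha1.not_gt)
    simpa only [div_le_comm₀ hγpos ha0] using this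
  exact le_of_mul_le_mul_left
    (hcount.trans (card_le_mul_sum_quantileWeight hγ0 hγ _)) hγpos

lemma lintegral_quantileWeight_pValue_le {Ω : Type*} [MeasurableSpace Ω] {μ : Measure Ω}
    {P : Ω → ℝ} (hP : Measurable P) {M J : ℝ} (hM : 1 ≤ M) (hJ : J = 0 ∨ J = 1)
    (hnull : J = 0 → ∀ ω, P ω = 1)
    (hsuper : J = 1 → ∀ u ∈ Set.Icc (0 : ℝ) 1, μ {ω | P ω ≤ u} ≤ ENNReal.ofReal (u / M))
    {γmin a : ℝ} (hγ0 : 0 < γmin) (hγ1 : γmin < 1) (ha0 : 0 < a) (ha1 : a < 1) :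
    ∫⁻ ω, ENNReal.ofReal (quantileWeight γmin (P ω * M / a)) ∂μ
      ≤ ENNReal.ofReal ((1 - log γmin) * a * (J / M)) := by
  have hM0 : 0 < M := zero_lt_one.trans_le hM
  rcases hJ with rfl | rfl
  · have hzero : ∀ ω, quantileWeight γmin (P ω * M / a) = 0 := fun ω => by
      rw [hnull rfl ω, one_mul]
      exact quantileWeight_of_one_le ((one_le_div ha0).2 (ha1.le.trans hM))
    simp [hzero]
  · have hcdf : ∀ t ∈ Set.Ioc (0 : ℝ) 1, μ {ω | P ω * M / a ≤ t} ≤ ENNReal.ofReal (a / M * t) := by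
      intro t ht
      have hu : t * a / M ∈ Set.Icc (0 : ℝ) 1 :=
        ⟨by have := ht.1; positivity,
          div_le_one_of_le₀ (mul_le_one₀ ht.2 ha0.le ha1.le |>.trans hM) hM0.le⟩
      calc μ {ω | P ω * M / a ≤ t} = μ {ω | P ω ≤ t * a / M} := by
            congr 1; ext ω; simp only [Set.mem_ofPred_eq, div_le_iff₀ ha0, le_div_iff₀ hM0]
        _ ≤ ENNReal.ofReal (t * a / M / M) := hsuper rfl _ hu
        _ ≤ ENNReal.ofReal (a / M * t) := by
            refine ENNReal.ofReal_le_ofReal ?_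
            rw [div_div, mul_comm (a / M), mul_div_assoc]
            have := ht.1
            gcongr
            exact le_mul_of_one_le_left hM0.le hM
    convert lintegral_quantileWeight_le ((hP.mul_const M).div_const a) hγ0 hγ1 hcdf using 2
    ring

lemma measure_adaptiveQuantile_lt_le {Ω : Type*} [MeasurableSpace Ω] (μ : Measure Ω) {B : ℕ}
    (hB : 0 < B) {p : Fin B → Ω → ℝ} {m I : Fin B → ℝ} (hmeas : ∀ b, Measurable (p b))
    (hm : ∀ b, 1 ≤ m b) (hI : ∀ b, I b = 0 ∨ I b = 1) (hp1 : ∀ b, I b = 0 → ∀ ω, p b ω = 1)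
    (hsuper : ∀ b, I b = 1 → ∀ u ∈ Set.Icc (0:ℝ) 1,
      μ {ω | p b ω ≤ u} ≤ ENNReal.ofReal (u / m b))
    {γmin a : ℝ} (hγ0 : 0 < γmin) (hγ1 : γmin < 1) (ha0 : 0 < a) (ha1 : a < 1) :
    μ {ω | adaptiveQuantile γmin (fun b => p b ω * m b) < a}
      ≤ ENNReal.ofReal ((1 - log γmin) * (a / B) * ∑ b, I b / m b) := by
  set W : Fin B → Ω → ENNReal := fun b ω => ENNReal.ofReal (quantileWeight γmin (p b ω * m b / a))
  have hW : ∀ b, Measurable (W b) := fun b =>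
    (measurable_quantileWeight.comp (((hmeas b).mul_const _).div_const _)).ennreal_ofReal
  have hterm : ∀ b, 0 ≤ (1 - log γmin) * a * (I b / m b) := fun b => by
    have hlog : 0 ≤ 1 - log γmin := sub_nonneg.2 ((log_nonpos hγ0.le hγ1.le).trans zero_le_one)
    have hm0 : 0 < m b := zero_lt_one.trans_le (hm b)
    rcases hI b with h | h <;> rw [h] <;> positivity
  calc μ {ω | adaptiveQuantile γmin (fun b => p b ω * m b) < a}
      ≤ μ {ω | (B : ENNReal) ≤ ∑ b, W b ω} := measure_mono fun ω hω => by
        rw [Set.mem_ofPred_eq, ← ENNReal.ofReal_natCast,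
          ← ENNReal.ofReal_sum_of_nonneg fun b _ => quantileWeight_nonneg hγ0 _]
        exact ENNReal.ofReal_le_ofReal (natCast_le_sum_quantileWeight hγ0 hγ1 ha0 ha1 _ hω)
    _ ≤ (∫⁻ ω, ∑ b, W b ω ∂μ) / B :=
        meas_ge_le_lintegral_div (Finset.measurable_sum _ fun b _ => hW b).aemeasurable
          (Nat.cast_ne_zero.2 hB.ne') (ENNReal.natCast_ne_top B)
    _ = (∑ b, ∫⁻ ω, W b ω ∂μ) / B := by rw [lintegral_finsetSum _ fun b _ => hW b]
    _ ≤ (∑ b, ENNReal.ofReal ((1 - log γmin) * a * (I b / m b))) / B := by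
        gcongr with b
        exact lintegral_quantileWeight_pValue_le (hmeas b) (hm b) (hI b) (hp1 b) (hsuper b)
          hγ0 hγ1 ha0 ha1
    _ = ENNReal.ofReal ((1 - log γmin) * (a / B) * ∑ b, I b / m b) := by
        rw [← ENNReal.ofReal_sum_of_nonneg fun b _ => hterm b, ← ENNReal.ofReal_natCast,
          ← ENNReal.ofReal_div_of_pos (Nat.cast_pos.2 hB), ← mul_sum]
        ring_nf

theorem stmt5_general {Ω : Type*} [MeasurableSpace Ω] (μ : Measure Ω)
    (B : ℕ) (hB : 0 < B) (p : Fin B → Ω → ℝ) (m : Fin B → ℝ) (I : Fin B → ℝ)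
    (hmeas : ∀ b, Measurable (p b))
    (hm : ∀ b, 1 ≤ m b)
    (hI : ∀ b, I b = 0 ∨ I b = 1)
    (hp1 : ∀ b, I b = 0 → ∀ ω, p b ω = 1)
    (hsuper : ∀ b, I b = 1 → ∀ u ∈ Set.Icc (0:ℝ) 1,
      μ {ω | p b ω ≤ u} ≤ ENNReal.ofReal (u / m b))
    (α γmin : ℝ) (hα : α ∈ Set.Ioo (0:ℝ) 1) (hγ : γmin ∈ Set.Ioo (0:ℝ) 1) :
    μ {ω | sInf ((fun γ => min 1 (empQuantile5 γ (fun b => p b ω * m b / γ))) ''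
            Set.Ioo γmin 1) ≤ α}
      ≤ ENNReal.ofReal ((1 - Real.log γmin) * (α / B) * ∑ b, I b / m b) := by
  obtain ⟨hα0, hα1⟩ := hα
  obtain ⟨hγ0, hγ1⟩ := hγ
  -- The infimum need not be attained, so bound the event `{· < a}` for `a > α` and let `a ↓ α`.
  have hbound : ∀ a ∈ Set.Ioo α 1,
      μ {ω | adaptiveQuantile γmin (fun b => p b ω * m b) ≤ α}
        ≤ ENNReal.ofReal ((1 - log γmin) * (a / B) * ∑ b, I b / m b) := fun a ha =>
    (measure_mono fun ω (hω : _ ≤ α) => hω.trans_lt ha.1).trans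
      (measure_adaptiveQuantile_lt_le μ hB hmeas hm hI hp1 hsuper hγ0 hγ1 (hα0.trans ha.1) ha.2)
  refine ge_of_tendsto ?_ (eventually_of_mem (Ioo_mem_nhdsGT hα1) hbound)
  exact ((ENNReal.continuous_ofReal.comp (by fun_prop)).tendsto α).mono_left nhdsWithin_le_nhds

/-- aggregation property of the adaptive quantile rule:
`P[inf_{γ ∈ (γ_min,1)} Q(γ) ≤ α] ≤ (1 − log γ_min)(α/B) Σ_b I^(b)/m^(b)`,
where `Q(γ) = min{1, q_γ(p^(1)m^(1)/γ, …, p^(B)m^(B)/γ)}`. -/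
theorem stmt5 {Ω : Type*} [MeasurableSpace Ω] (μ : Measure Ω) [IsProbabilityMeasure μ]
    (B : ℕ) (hB : 0 < B) (p : Fin B → Ω → ℝ) (m : Fin B → ℝ) (I : Fin B → ℝ)
    (hmeas : ∀ b, Measurable (p b))
    (hp01 : ∀ b ω, p b ω ∈ Set.Icc (0:ℝ) 1)
    (hm : ∀ b, 1 ≤ m b)
    (hI : ∀ b, I b = 0 ∨ I b = 1)
    (hp1 : ∀ b, I b = 0 → ∀ ω, p b ω = 1)
    (hsuper : ∀ b, I b = 1 → ∀ u ∈ Set.Icc (0:ℝ) 1,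
      μ {ω | p b ω ≤ u} ≤ ENNReal.ofReal (u / m b))
    (α γmin : ℝ) (hα : α ∈ Set.Ioo (0:ℝ) 1) (hγ : γmin ∈ Set.Ioo (0:ℝ) 1) :
    μ {ω | sInf ((fun γ => min 1 (empQuantile5 γ (fun b => p b ω * m b / γ))) ''
            Set.Ioo γmin 1) ≤ α}
      ≤ ENNReal.ofReal ((1 - Real.log γmin) * (α / B) * ∑ b, I b / m b) :=
  stmt5_general μ B hB p m I hmeas hm hI hp1 hsuper α γmin hα hγ
end

section
/- Let C be a hierarchical collection of finite subsets of {1,...,p} (any two clusters are nested or disjoint), let Ŝ ⊆ {1,...,p} be nonempty, and let R ⊆ C be a downward-ancestor-closed-complement rejected set. If D_1, ..., D_k are distinct clusters in C \ R each of whose sets of ancestors anc(D_j) in the tree are contained in R, then no D_j is a subset of another D_{j'} (j ≠ j'), hence the D_j are pairwise disjoint, and therefore Σ_j |Ŝ ∩ D_j| ≤ |Ŝ|. -/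
open Finset

/-- in a hierarchical collection, distinct clusters outside `R` whose
(strict) ancestors all lie in `R` are pairwise non-nested, hence pairwise disjoint,
and therefore `Σ_j |Ŝ ∩ D_j| ≤ |Ŝ|`. -/
theorem stmt8 (p k : ℕ) (C : Finset (Finset (Fin p)))
    (hhier : ∀ A ∈ C, ∀ B ∈ C, A ⊆ B ∨ B ⊆ A ∨ Disjoint A B)
    (Shat : Finset (Fin p)) (hShat : Shat.Nonempty)
    (R : Set (Finset (Fin p)))
    (D : Fin k → Finset (Fin p)) (hinj : Function.Injective D)
    (hmem : ∀ j, D j ∈ C) (hnotR : ∀ j, D j ∉ R)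
    (hanc : ∀ j, ∀ E ∈ C, D j ⊂ E → E ∈ R) :
    (∀ j j', j ≠ j' → ¬ D j ⊆ D j') ∧
    (∀ j j', j ≠ j' → Disjoint (D j) (D j')) ∧
    ∑ j, (Shat ∩ D j).card ≤ Shat.card := by
  have hns : ∀ j j', j ≠ j' → ¬ D j ⊆ D j' := by
    intro j j' hjj hsub
    have hne : D j ≠ D j' := fun h => hjj (hinj h)
    exact hnotR j' (hanc j (D j') (hmem j') (ssubset_of_subset_of_ne hsub hne))
  have hdisj : ∀ j j', j ≠ j' → Disjoint (D j) (D j') := by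
    intro j j' hjj
    rcases hhier _ (hmem j) _ (hmem j') with h | h | h
    · exact absurd h (hns j j' hjj)
    · exact absurd h (hns j' j hjj.symm)
    · exact h
  refine ⟨hns, hdisj, ?_⟩
  calc ∑ j, (Shat ∩ D j).card = ((univ : Finset (Fin k)).biUnion fun j => Shat ∩ D j).card := by
        refine (Finset.card_biUnion ?_).symm
        intro j _ j' _ hjj
        exact Finset.disjoint_left.2 fun a ha ha' =>
          Finset.disjoint_left.1 (hdisj j j' hjj) (mem_of_mem_inter_right ha)
            (mem_of_mem_inter_right ha')
    _ ≤ Shat.card := Finset.card_le_card (by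
        intro a ha
        rcases Finset.mem_biUnion.1 ha with ⟨j, _, ha⟩
        exact mem_of_mem_inter_left ha)
end

section
/- Consider an abstract sequential rejection procedure on a finite collection C of hypotheses: given a successor map N : 2^C → 2^C, define R_0 = ∅, R_{i+1} = R_i ∪ N(R_i). Suppose N satisfies (i) monotonicity: R ⊆ S ⟹ N(R) ⊆ N(S) ∪ S, and (ii) single-step condition: P[N(F) ⊆ F] ≥ 1 − η, where F ⊆ C is the set of false hypotheses. Then on the event {N(F) ⊆ F}, R_i ⊆ F for all i ≥ 0; hence P[R_i ⊆ F for all i] ≥ 1 − η. -/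
open MeasureTheory

/-- The sequence of rejection sets of a sequential rejection procedure:
`R_0 = ∅`, `R_{i+1} = R_i ∪ N(R_i)`. -/
def rejSeq {H : Type*} (N : Set H → Set H) : ℕ → Set H
  | 0 => ∅
  | i + 1 => rejSeq N i ∪ N (rejSeq N i)

/-- the sequential rejection principle. If the (random) successor map
`N` is monotone (`R ⊆ S → N(R) ⊆ N(S) ∪ S`) and satisfies the single-step condition
`P[N(F) ⊆ F] ≥ 1 − η`, then on `{N(F) ⊆ F}` one has `R_i ⊆ F` for all `i`, hence
`P[R_i ⊆ F for all i] ≥ 1 − η`. -/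
theorem stmt14 {Ω H : Type*} [Finite H] [MeasurableSpace Ω]
    (μ : Measure Ω) [IsProbabilityMeasure μ]
    (N : Ω → Set H → Set H) (F : Set H) (η : ℝ)
    (hmono : ∀ ω (R S : Set H), R ⊆ S → N ω R ⊆ N ω S ∪ S)
    (hstep : ENNReal.ofReal (1 - η) ≤ μ {ω | N ω F ⊆ F}) :
    (∀ ω, N ω F ⊆ F → ∀ i, rejSeq (N ω) i ⊆ F) ∧
    ENNReal.ofReal (1 - η) ≤ μ {ω | ∀ i, rejSeq (N ω) i ⊆ F} := by
  have key : ∀ ω, N ω F ⊆ F → ∀ i, rejSeq (N ω) i ⊆ F := by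
    intro ω hF i
    induction i with
    | zero => simp [rejSeq]
    | succ n ih =>
      have h := hmono ω _ _ ih
      intro x hx
      rcases hx with hx | hx
      · exact ih hx
      · rcases h hx with hx | hx
        · exact hF hx
        · exact hx
  refine ⟨key, le_trans hstep (μ.mono ?_)⟩
  intro ω hω
  exact key ω hω
end

section
/- For the inheritance multiplicity adjustment on a hierarchical tree, m_C(R) = (|Ŝ|/|Ŝ ∩ C|) Π_{D ∈ anc(C)} n_D(R) with n_D(R) = (1/|Ŝ ∩ D|) Σ_{E ∈ ch(D)\E(R)} |Ŝ ∩ E|, the single-step property holds: Σ_{C ∈ C\R, anc(C) ⊆ R, Ŝ∩C ≠ ∅} 1/m_C(R) ≤ 1. -/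
open Finset

attribute [local instance] Classical.propDecidable

section Aux

variable {p : ℕ} (Cfam : Finset (Finset (Fin p))) (ch : Finset (Fin p) → Finset (Finset (Fin p)))
  (Shat : Finset (Fin p)) (R : Set (Finset (Fin p)))

noncomputable def sigR (D : Finset (Fin p)) : ℝ :=
  ∑ E ∈ ch D, if (∀ G ∈ Cfam, G ⊆ E → G ∈ R) then 0 else ((Shat ∩ E).card : ℝ)

noncomputable def ggR (D : Finset (Fin p)) : ℝ :=
  (((Shat ∩ D).card : ℝ) / (Shat.card : ℝ)) *
    ∏ A ∈ Cfam.filter (fun A => D ⊂ A), ((Shat ∩ A).card : ℝ) / sigR Cfam ch Shat R A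

noncomputable def termR (C : Finset (Fin p)) : ℝ :=
  if C ∉ R ∧ (∀ D ∈ Cfam, C ⊂ D → D ∈ R) ∧ (Shat ∩ C).Nonempty then
    1 / (((Shat.card : ℝ) / ((Shat ∩ C).card : ℝ)) *
      ∏ D ∈ Cfam.filter (fun D => C ⊂ D), (sigR Cfam ch Shat R D / ((Shat ∩ D).card : ℝ)))
  else 0

lemma sigR_nonneg (D : Finset (Fin p)) : 0 ≤ sigR Cfam ch Shat R D := by
  refine Finset.sum_nonneg fun E _ => ?_
  split <;> positivity

lemma ggR_nonneg (D : Finset (Fin p)) : 0 ≤ ggR Cfam ch Shat R D := by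
  refine mul_nonneg (by positivity) (Finset.prod_nonneg fun A _ => ?_)
  exact div_nonneg (by positivity) (sigR_nonneg Cfam ch Shat R A)

lemma termR_nonneg (C : Finset (Fin p)) : 0 ≤ termR Cfam ch Shat R C := by
  unfold termR
  split
  · refine one_div_nonneg.mpr (mul_nonneg (by positivity) (Finset.prod_nonneg fun A _ => ?_))
    exact div_nonneg (sigR_nonneg Cfam ch Shat R A) (by positivity)
  · exact le_refl _

lemma keyR (hhier : ∀ C ∈ Cfam, ∀ D ∈ Cfam, C ⊆ D ∨ D ⊆ C ∨ Disjoint C D)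
    (hch1 : ∀ D ∈ Cfam, ∀ E ∈ ch D, E ∈ Cfam ∧ E ⊂ D)
    (hch2 : ∀ D ∈ Cfam, (ch D).Nonempty →
      ((ch D : Set (Finset (Fin p))).PairwiseDisjoint id ∧ (ch D).biUnion id = D))
    (hch3 : ∀ C ∈ Cfam, ∀ D ∈ Cfam, C ⊂ D → ∃ E ∈ ch D, C ⊆ E)
    (hShat : Shat.Nonempty) :
    ∀ n : ℕ, ∀ D ∈ Cfam, D.card ≤ n → (∀ A ∈ Cfam, D ⊂ A → A ∈ R) →
      ∑ C ∈ Cfam.filter (fun C => C ⊆ D ∧ (Shat ∩ C).Nonempty), termR Cfam ch Shat R C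
        ≤ ggR Cfam ch Shat R D := by
  intro n
  induction n with
  | zero =>
    intro D hD hcard _
    have hD0 : D = ∅ := Finset.card_eq_zero.mp (Nat.le_zero.mp hcard)
    have hfe : Cfam.filter (fun C => C ⊆ D ∧ (Shat ∩ C).Nonempty) = ∅ := by
      refine Finset.filter_eq_empty_iff.mpr fun C hC => ?_
      rintro ⟨hsub, x, hx⟩
      have := hsub (Finset.mem_inter.mp hx).2
      simp [hD0] at this
    rw [hfe, Finset.sum_empty]
    exact ggR_nonneg Cfam ch Shat R D
  | succ n IH =>
    intro D hD hcard hanc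
    by_cases hDR : D ∈ R
    · -- recursive case: descend into children
      have hanc' : ∀ E ∈ ch D, E.Nonempty → ∀ A ∈ Cfam, E ⊂ A → A = D ∨ D ⊂ A := by
        rintro E hE ⟨x, hx⟩ A hA hEA
        obtain ⟨hECfam, hED⟩ := hch1 D hD E hE
        rcases hhier A hA D hD with hAD | hDA | hdis
        · rcases eq_or_ne A D with rfl | hne
          · exact Or.inl rfl
          · exfalso
            obtain ⟨E', hE', hAE'⟩ := hch3 A hA D hD (ssubset_of_subset_of_ne hAD hne)
            by_cases hEE' : E = E'
            · subst hEE'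
              exact absurd (lt_of_lt_of_le hEA hAE') (lt_irrefl E)
            · have hdj := (hch2 D hD ⟨E, hE⟩).1 (Finset.mem_coe.mpr hE)
                (Finset.mem_coe.mpr hE') hEE'
              exact Finset.disjoint_left.mp hdj hx (hAE' (hEA.subset hx))
        · rcases eq_or_ne A D with rfl | hne
          · exact Or.inl rfl
          · exact Or.inr (ssubset_of_subset_of_ne hDA (Ne.symm hne))
        · exact absurd (hED.subset hx) (Finset.disjoint_left.mp hdis (hEA.subset hx))
      have htD : termR Cfam ch Shat R D = 0 := by
        unfold termR; rw [if_neg]; rintro ⟨h1, _, _⟩; exact h1 hDR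
      have hsubset : (Cfam.filter (fun C => C ⊆ D ∧ (Shat ∩ C).Nonempty)).erase D ⊆
          (ch D).biUnion (fun E => Cfam.filter (fun C => C ⊆ E ∧ (Shat ∩ C).Nonempty)) := by
        intro C hC
        obtain ⟨hne, hC⟩ := Finset.mem_erase.mp hC
        obtain ⟨hCfam, hsub, hSne⟩ := Finset.mem_filter.mp hC
        obtain ⟨E, hE, hCE⟩ := hch3 C hCfam D hD (ssubset_of_subset_of_ne hsub hne)
        exact Finset.mem_biUnion.mpr ⟨E, hE, Finset.mem_filter.mpr ⟨hCfam, hCE, hSne⟩⟩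
      have hdisj : ((ch D : Set (Finset (Fin p)))).PairwiseDisjoint
          (fun E => Cfam.filter (fun C => C ⊆ E ∧ (Shat ∩ C).Nonempty)) := by
        intro E hE E' hE' hne
        simp only [Function.onFun]
        rw [Finset.disjoint_left]
        intro C hCE hCE'
        obtain ⟨_, hC1, x, hx⟩ := Finset.mem_filter.mp hCE
        obtain ⟨_, hC1', _⟩ := Finset.mem_filter.mp hCE'
        have hdj := (hch2 D hD ⟨E, Finset.mem_coe.mp hE⟩).1 hE hE' hne
        exact Finset.disjoint_left.mp hdj (hC1 (Finset.mem_inter.mp hx).2)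
          (hC1' (Finset.mem_inter.mp hx).2)
      have hbound : ∀ E ∈ ch D,
          ∑ C ∈ Cfam.filter (fun C => C ⊆ E ∧ (Shat ∩ C).Nonempty), termR Cfam ch Shat R C ≤
          (if (∀ G ∈ Cfam, G ⊆ E → G ∈ R) then 0 else ggR Cfam ch Shat R E) := by
        intro E hE
        obtain ⟨hECfam, hED⟩ := hch1 D hD E hE
        by_cases hext : ∀ G ∈ Cfam, G ⊆ E → G ∈ R
        · rw [if_pos hext]
          refine le_of_eq (Finset.sum_eq_zero fun C hC => ?_)
          obtain ⟨hCfam, hCE, _⟩ := Finset.mem_filter.mp hC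
          unfold termR; rw [if_neg]; rintro ⟨h1, _, _⟩; exact h1 (hext C hCfam hCE)
        · rw [if_neg hext]
          by_cases hSE : (Shat ∩ E).Nonempty
          · have hEanc : ∀ A ∈ Cfam, E ⊂ A → A ∈ R := by
              intro A hA hEA
              rcases hanc' E hE ⟨hSE.choose, (Finset.mem_inter.mp hSE.choose_spec).2⟩ A hA hEA with
                rfl | h
              · exact hDR
              · exact hanc A hA h
            exact IH E hECfam (Nat.lt_succ_iff.mp
              (lt_of_lt_of_le (Finset.card_lt_card hED) hcard)) hEanc
          · have hfe : Cfam.filter (fun C => C ⊆ E ∧ (Shat ∩ C).Nonempty) = ∅ := by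
              refine Finset.filter_eq_empty_iff.mpr fun C hC => ?_
              rintro ⟨hsub, x, hx⟩
              exact hSE ⟨x, Finset.mem_inter.mpr ⟨(Finset.mem_inter.mp hx).1,
                hsub (Finset.mem_inter.mp hx).2⟩⟩
            rw [hfe, Finset.sum_empty]
            exact ggR_nonneg Cfam ch Shat R E
      have hfactor : ∀ E ∈ ch D,
          (if (∀ G ∈ Cfam, G ⊆ E → G ∈ R) then 0 else ggR Cfam ch Shat R E) =
          ggR Cfam ch Shat R D *
            ((if (∀ G ∈ Cfam, G ⊆ E → G ∈ R) then 0 else ((Shat ∩ E).card : ℝ)) /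
              sigR Cfam ch Shat R D) := by
        intro E hE
        obtain ⟨hECfam, hED⟩ := hch1 D hD E hE
        by_cases hext : ∀ G ∈ Cfam, G ⊆ E → G ∈ R
        · rw [if_pos hext, if_pos hext, zero_div, mul_zero]
        · rw [if_neg hext, if_neg hext]
          by_cases hSE : (Shat ∩ E).Nonempty
          · have hfilter : Cfam.filter (fun A => E ⊂ A) =
                insert D (Cfam.filter (fun A => D ⊂ A)) := by
              ext A
              simp only [Finset.mem_filter, Finset.mem_insert]
              constructor
              · rintro ⟨hA, hEA⟩
                rcases hanc' E hE ⟨hSE.choose, (Finset.mem_inter.mp hSE.choose_spec).2⟩ A hA hEA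
                  with rfl | h
                · exact Or.inl rfl
                · exact Or.inr ⟨hA, h⟩
              · rintro (rfl | ⟨hA, hDA⟩)
                · exact ⟨hD, hED⟩
                · exact ⟨hA, hED.trans hDA⟩
            unfold ggR
            have hDnot : D ∉ Cfam.filter (fun A => D ⊂ A) :=
              fun h => lt_irrefl D (Finset.mem_filter.mp h).2
            rw [hfilter, Finset.prod_insert hDnot]
            ring
          · have h0 : ((Shat ∩ E).card : ℝ) = 0 := by
              simp [Finset.not_nonempty_iff_eq_empty.mp hSE]
            unfold ggR
            rw [h0, zero_div, zero_mul, zero_div, mul_zero]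
      have hle1 : sigR Cfam ch Shat R D / sigR Cfam ch Shat R D ≤ 1 := by
        rcases eq_or_lt_of_le (sigR_nonneg Cfam ch Shat R D) with h | h
        · rw [← h]; norm_num
        · rw [div_self h.ne']
      calc ∑ C ∈ Cfam.filter (fun C => C ⊆ D ∧ (Shat ∩ C).Nonempty), termR Cfam ch Shat R C
          = ∑ C ∈ (Cfam.filter (fun C => C ⊆ D ∧ (Shat ∩ C).Nonempty)).erase D,
              termR Cfam ch Shat R C := (Finset.sum_erase _ htD).symm
        _ ≤ ∑ C ∈ (ch D).biUnion (fun E => Cfam.filter (fun C => C ⊆ E ∧ (Shat ∩ C).Nonempty)),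
              termR Cfam ch Shat R C :=
            Finset.sum_le_sum_of_subset_of_nonneg hsubset
              (fun C _ _ => termR_nonneg Cfam ch Shat R C)
        _ = ∑ E ∈ ch D, ∑ C ∈ Cfam.filter (fun C => C ⊆ E ∧ (Shat ∩ C).Nonempty),
              termR Cfam ch Shat R C := Finset.sum_biUnion hdisj
        _ ≤ ∑ E ∈ ch D, (if (∀ G ∈ Cfam, G ⊆ E → G ∈ R) then 0 else ggR Cfam ch Shat R E) :=
            Finset.sum_le_sum hbound
        _ = ∑ E ∈ ch D, ggR Cfam ch Shat R D *
              ((if (∀ G ∈ Cfam, G ⊆ E → G ∈ R) then 0 else ((Shat ∩ E).card : ℝ)) /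
                sigR Cfam ch Shat R D) := Finset.sum_congr rfl hfactor
        _ = ggR Cfam ch Shat R D * (sigR Cfam ch Shat R D / sigR Cfam ch Shat R D) := by
            rw [← Finset.mul_sum, ← Finset.sum_div]
            rfl
        _ ≤ ggR Cfam ch Shat R D * 1 :=
            mul_le_mul_of_nonneg_left hle1 (ggR_nonneg Cfam ch Shat R D)
        _ = ggR Cfam ch Shat R D := mul_one _
    · -- D is itself a maximal non-rejected node
      have hzero : ∀ C ∈ Cfam.filter (fun C => C ⊆ D ∧ (Shat ∩ C).Nonempty), C ≠ D →
          termR Cfam ch Shat R C = 0 := by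
        intro C hC hne
        obtain ⟨hCfam, hsub, _⟩ := Finset.mem_filter.mp hC
        unfold termR; rw [if_neg]
        rintro ⟨_, h2, _⟩
        exact hDR (h2 D hD (ssubset_of_subset_of_ne hsub hne))
      by_cases hSD : (Shat ∩ D).Nonempty
      · have hmem : D ∈ Cfam.filter (fun C => C ⊆ D ∧ (Shat ∩ C).Nonempty) :=
          Finset.mem_filter.mpr ⟨hD, Finset.Subset.refl D, hSD⟩
        rw [Finset.sum_eq_single_of_mem D hmem hzero]
        unfold termR
        rw [if_pos ⟨hDR, hanc, hSD⟩]
        unfold ggR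
        rw [one_div, mul_inv, ← Finset.prod_inv_distrib]
        simp only [inv_div]
        exact le_rfl
      · have hfe : Cfam.filter (fun C => C ⊆ D ∧ (Shat ∩ C).Nonempty) = ∅ := by
          refine Finset.filter_eq_empty_iff.mpr fun C hC => ?_
          rintro ⟨hsub, x, hx⟩
          exact hSD ⟨x, Finset.mem_inter.mpr ⟨(Finset.mem_inter.mp hx).1,
            hsub (Finset.mem_inter.mp hx).2⟩⟩
        rw [hfe, Finset.sum_empty]
        exact ggR_nonneg Cfam ch Shat R D

end Aux

/-- single-step property of the inheritance multiplicity adjustment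
`m_C(R) = (|Ŝ|/|Ŝ ∩ C|) Π_{D ∈ anc(C)} n_D(R)` on a hierarchical cluster tree,
where `anc(C)` are the strict ancestors of `C` in the collection (strict supersets),
`n_D(R) = (1/|Ŝ ∩ D|) Σ_{E ∈ ch(D) \ E(R)} |Ŝ ∩ E|`, and a node `E` is extinct
(`E ∈ E(R)`) iff all its offspring in the collection, including itself, lie in `R`:
the sum over `C ∈ 𝒞\R` with `anc(C) ⊆ R` and `Ŝ ∩ C ≠ ∅` of `1/m_C(R)` is `≤ 1`. -/
theorem stmt18 (p : ℕ) (Cfam : Finset (Finset (Fin p))) (T : Finset (Fin p))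
    (hT : T ∈ Cfam) (hroot : ∀ C ∈ Cfam, C ⊆ T)
    (hhier : ∀ C ∈ Cfam, ∀ D ∈ Cfam, C ⊆ D ∨ D ⊆ C ∨ Disjoint C D)
    (ch : Finset (Fin p) → Finset (Finset (Fin p)))
    -- children are clusters and strict subsets of their parent
    (hch1 : ∀ D ∈ Cfam, ∀ E ∈ ch D, E ∈ Cfam ∧ E ⊂ D)
    -- the children of an internal node partition it
    (hch2 : ∀ D ∈ Cfam, (ch D).Nonempty →
      ((ch D : Set (Finset (Fin p))).PairwiseDisjoint id ∧ (ch D).biUnion id = D))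
    -- every strict descendant of a node lies in one of its children
    (hch3 : ∀ C ∈ Cfam, ∀ D ∈ Cfam, C ⊂ D → ∃ E ∈ ch D, C ⊆ E)
    (Shat : Finset (Fin p)) (hShat : Shat.Nonempty) (hShatT : Shat ⊆ T)
    (R : Set (Finset (Fin p)))
    -- for each summand, all factors n_D(R) are positive
    (hpos : ∀ C ∈ Cfam,
      (C ∉ R ∧ (∀ D ∈ Cfam, C ⊂ D → D ∈ R) ∧ (Shat ∩ C).Nonempty) →
      ∀ D ∈ Cfam, C ⊂ D →
        0 < (∑ E ∈ ch D, if (∀ G ∈ Cfam, G ⊆ E → G ∈ R) then 0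
              else ((Shat ∩ E).card : ℝ)) / ((Shat ∩ D).card : ℝ)) :
    ∑ C ∈ Cfam,
        (if C ∉ R ∧ (∀ D ∈ Cfam, C ⊂ D → D ∈ R) ∧ (Shat ∩ C).Nonempty then
          1 / (((Shat.card : ℝ) / ((Shat ∩ C).card : ℝ)) *
            ∏ D ∈ Cfam.filter (fun D => C ⊂ D),
              ((∑ E ∈ ch D, if (∀ G ∈ Cfam, G ⊆ E → G ∈ R) then 0
                  else ((Shat ∩ E).card : ℝ)) / ((Shat ∩ D).card : ℝ)))
        else 0) ≤ 1 := by
  have hancT : ∀ A ∈ Cfam, T ⊂ A → A ∈ R := fun A hA hTA =>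
    absurd (hroot A hA) hTA.not_subset
  have key := keyR Cfam ch Shat R hhier hch1 hch2 hch3 hShat T.card T hT le_rfl hancT
  have hfT : Cfam.filter (fun A => T ⊂ A) = ∅ :=
    Finset.filter_eq_empty_iff.mpr fun A hA hTA => hTA.not_subset (hroot A hA)
  have hggT : ggR Cfam ch Shat R T = 1 := by
    rw [ggR, hfT, Finset.prod_empty, mul_one, Finset.inter_eq_left.mpr hShatT]
    exact div_self (Nat.cast_ne_zero.mpr hShat.card_pos.ne')
  calc ∑ C ∈ Cfam,
        (if C ∉ R ∧ (∀ D ∈ Cfam, C ⊂ D → D ∈ R) ∧ (Shat ∩ C).Nonempty then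
          1 / (((Shat.card : ℝ) / ((Shat ∩ C).card : ℝ)) *
            ∏ D ∈ Cfam.filter (fun D => C ⊂ D),
              ((∑ E ∈ ch D, if (∀ G ∈ Cfam, G ⊆ E → G ∈ R) then 0
                  else ((Shat ∩ E).card : ℝ)) / ((Shat ∩ D).card : ℝ)))
        else 0)
      = ∑ C ∈ Cfam, termR Cfam ch Shat R C := by simp only [termR, sigR]
    _ = ∑ C ∈ Cfam.filter (fun C => C ⊆ T ∧ (Shat ∩ C).Nonempty), termR Cfam ch Shat R C := by
        refine (Finset.sum_filter_of_ne fun C hC hne => ?_).symm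
        refine ⟨hroot C hC, ?_⟩
        by_contra hSC
        exact hne (by unfold termR; rw [if_neg (by rintro ⟨_, _, h⟩; exact hSC h)])
    _ ≤ ggR Cfam ch Shat R T := key
    _ = 1 := hggT
end
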